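/- For t ≤ 1, the map φ_{t,√(1−t²)} = t φ₀ ⊕ √(1−t²) φ₁ : SU(2) → ℝ⁷ is an isometric embedding with respect to the Berger metric h_t = σ₁² + σ₂² + t²σ₃². -/

import Mathlib

/- STATEMENT 13: for `0 < t ≤ 1`, the map
`φ_{t,√(1−t²)} = tφ₀ ⊕ √(1−t²)φ₁ : SU(2) → ℝ⁷` is an isometric embedding with respect to
the Berger metric `h_t = σ₁² + σ₂² + t²σ₃²`: it is injective on SU(2) and its pullback of
the Euclidean metric of `ℝ⁷` equals `h_t` (expressed via quadratic forms on tangent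
vectors of the unit sphere `SU(2) ⊂ ℂ²`). -/

open Complex

/-- `SU(2)`, identified with the unit sphere in `ℂ²`. -/
def SU2 : Set (ℂ × ℂ) := {ζ | Complex.normSq ζ.1 + Complex.normSq ζ.2 = 1}

/-- `w` is tangent to the unit sphere `SU(2)` at `ζ`. -/
def TangentSU2 (ζ w : ℂ × ℂ) : Prop :=
  ((starRingEnd ℂ) ζ.1 * w.1 + (starRingEnd ℂ) ζ.2 * w.2).re = 0

/-- The left-invariant one-form `σ₁` (with `σ₁ + iσ₂ = i(ζ₂dζ₁ − ζ₁dζ₂)`). -/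
noncomputable def sig1 (ζ w : ℂ × ℂ) : ℝ := (Complex.I * (ζ.2 * w.1 - ζ.1 * w.2)).re

/-- The left-invariant one-form `σ₂`. -/
noncomputable def sig2 (ζ w : ℂ × ℂ) : ℝ := (Complex.I * (ζ.2 * w.1 - ζ.1 * w.2)).im

/-- The left-invariant one-form `σ₃ = −i(ζ̄₁dζ₁ + ζ̄₂dζ₂)`. -/
noncomputable def sig3 (ζ w : ℂ × ℂ) : ℝ :=
  (-Complex.I * ((starRingEnd ℂ) ζ.1 * w.1 + (starRingEnd ℂ) ζ.2 * w.2)).re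

/-- The ℂ-valued component of the Hopf map, `ζ₁ζ̄₂`. -/
noncomputable def hopfC (ζ : ℂ × ℂ) : ℂ := ζ.1 * (starRingEnd ℂ) ζ.2

/-- The ℝ-valued component of the Hopf map, `½(|ζ₁|²−|ζ₂|²)`. -/
noncomputable def hopfR (ζ : ℂ × ℂ) : ℝ := (Complex.normSq ζ.1 - Complex.normSq ζ.2) / 2

/-- The map `φ_{t,√(1−t²)} = tφ₀ ⊕ √(1−t²)φ₁ : SU(2) → ℂ × ℂ × ℂ × ℝ ≅ ℝ⁷`. -/
noncomputable def bergerMap (t : ℝ) (ζ : ℂ × ℂ) : ℂ × ℂ × ℂ × ℝ :=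
  ((t : ℂ) * ζ.1, (t : ℂ) * ζ.2, (Real.sqrt (1 - t ^ 2) : ℂ) * hopfC ζ,
    Real.sqrt (1 - t ^ 2) * hopfR ζ)

lemma fderiv_hopfC (ζ w : ℂ × ℂ) :
    fderiv ℝ hopfC ζ w = w.1 * (starRingEnd ℂ) ζ.2 + ζ.1 * (starRingEnd ℂ) w.2 := by
  have h1 : HasFDerivAt (fun p : ℂ × ℂ => p.1) (ContinuousLinearMap.fst ℝ ℂ ℂ) ζ :=
    hasFDerivAt_fst
  have h2 : HasFDerivAt (fun p : ℂ × ℂ => (starRingEnd ℂ) p.2)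
      ((Complex.conjCLE.toContinuousLinearMap).comp (ContinuousLinearMap.snd ℝ ℂ ℂ)) ζ :=
    (Complex.conjCLE.toContinuousLinearMap.hasFDerivAt).comp ζ hasFDerivAt_snd
  have h := h1.mul h2
  have heq : fderiv ℝ hopfC ζ = _ := h.fderiv
  rw [heq]
  simp [smul_eq_mul]
  ring

lemma fderiv_hopfR (ζ w : ℂ × ℂ) :
    fderiv ℝ hopfR ζ w = ((starRingEnd ℂ) ζ.1 * w.1).re - ((starRingEnd ℂ) ζ.2 * w.2).re := by
  have hre1 : HasFDerivAt (fun p : ℂ × ℂ => p.1.re)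
      (Complex.reCLM.comp (ContinuousLinearMap.fst ℝ ℂ ℂ)) ζ :=
    (Complex.reCLM.hasFDerivAt).comp ζ hasFDerivAt_fst
  have him1 : HasFDerivAt (fun p : ℂ × ℂ => p.1.im)
      (Complex.imCLM.comp (ContinuousLinearMap.fst ℝ ℂ ℂ)) ζ :=
    (Complex.imCLM.hasFDerivAt).comp ζ hasFDerivAt_fst
  have hre2 : HasFDerivAt (fun p : ℂ × ℂ => p.2.re)
      (Complex.reCLM.comp (ContinuousLinearMap.snd ℝ ℂ ℂ)) ζ :=
    (Complex.reCLM.hasFDerivAt).comp ζ hasFDerivAt_snd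
  have him2 : HasFDerivAt (fun p : ℂ × ℂ => p.2.im)
      (Complex.imCLM.comp (ContinuousLinearMap.snd ℝ ℂ ℂ)) ζ :=
    (Complex.imCLM.hasFDerivAt).comp ζ hasFDerivAt_snd
  have h := ((((hre1.mul hre1).add (him1.mul him1)).sub
      ((hre2.mul hre2).add (him2.mul him2))).const_mul ((2:ℝ)⁻¹))
  have heq : hopfR = fun p : ℂ × ℂ =>
      (2:ℝ)⁻¹ * (p.1.re * p.1.re + p.1.im * p.1.im - (p.2.re * p.2.re + p.2.im * p.2.im)) := by
    funext p; simp [hopfR, Complex.normSq_apply]; ring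
  rw [heq]
  rw [(show HasFDerivAt (fun p : ℂ × ℂ =>
      (2:ℝ)⁻¹ * (p.1.re * p.1.re + p.1.im * p.1.im - (p.2.re * p.2.re + p.2.im * p.2.im))) _ ζ
      from h).fderiv]
  simp [smul_eq_mul, Complex.mul_re]
  ring

theorem stmt_13 (t : ℝ) (ht0 : 0 < t) (ht1 : t ≤ 1) :
    -- φ_{t,√(1−t²)} is injective on SU(2) :
    (∀ ζ ∈ SU2, ∀ η ∈ SU2, bergerMap t ζ = bergerMap t η → ζ = η) ∧
    -- φ_{t,√(1−t²)} is isometric for the Berger metric h_t = σ₁² + σ₂² + t²σ₃² :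
    (∀ ζ ∈ SU2, ∀ w : ℂ × ℂ, TangentSU2 ζ w →
      t ^ 2 * (Complex.normSq w.1 + Complex.normSq w.2)
        + (1 - t ^ 2) * (Complex.normSq (fderiv ℝ hopfC ζ w) + (fderiv ℝ hopfR ζ w) ^ 2)
      = sig1 ζ w ^ 2 + sig2 ζ w ^ 2 + t ^ 2 * sig3 ζ w ^ 2) := by
  constructor
  · intro ζ _ η _ h
    have ht : (t : ℂ) ≠ 0 := by
      simpa using ht0.ne'
    have h1 : (t : ℂ) * ζ.1 = (t : ℂ) * η.1 := congrArg (fun x => x.1) h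
    have h2 : (t : ℂ) * ζ.2 = (t : ℂ) * η.2 := congrArg (fun x => x.2.1) h
    exact Prod.ext (mul_left_cancel₀ ht h1) (mul_left_cancel₀ ht h2)
  · intro ζ hζ w hw
    rw [fderiv_hopfC, fderiv_hopfR]
    have hζ' : Complex.normSq ζ.1 + Complex.normSq ζ.2 = 1 := hζ
    simp only [sig1, sig2, sig3, TangentSU2, Complex.normSq_apply, Complex.mul_re,
      Complex.mul_im, Complex.add_re, Complex.add_im, Complex.sub_re, Complex.sub_im,
      Complex.I_re, Complex.I_im, Complex.neg_re, Complex.neg_im, Complex.conj_re,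
      Complex.conj_im] at hζ' hw ⊢
    linear_combination (-(t^2) * (w.1.re^2 + w.1.im^2 + w.2.re^2 + w.2.im^2)) * hζ' +
      (ζ.1.re * w.1.re + ζ.1.im * w.1.im + ζ.2.re * w.2.re + ζ.2.im * w.2.im) * hw
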